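/- arXiv:1411.1334 — 3 statements merged into one kernel-verified Lean document; each statement's English description precedes it below -/
import Mathlib

section
/- For all m ≥ 0 and n ≥ 0, the closed-form expression a_{m,n} = ∏_{r ∈ S_m} p_{n+r} holds, where S_m = { r : 0 ≤ r ≤ m and the binomial coefficient C(m,r) is odd }. -/
/-- `Z a b = a*b / gcd(a,b)^2`. -/
def Zfun (a b : ℕ) : ℕ := a * b / Nat.gcd a b ^ 2

/-- The array: `ent 0 n` is the `n`-th prime (0-indexed), and
`ent (m+1) n = Z (ent m n) (ent m (n+1))`. -/
noncomputable def ent : ℕ → ℕ → ℕ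
  | 0, n => Nat.nth Nat.Prime n
  | m + 1, n => Zfun (ent m n) (ent m (n + 1))

/-- The left edge `d_m`. -/
noncomputable def dseq (m : ℕ) : ℕ := ent m 0

/-!
Write `a_{m,n} = ∏_{r ∈ S} p_{n+r}` for a finite set `S`. On products of distinct primes,
`Z` is the product over the symmetric difference of the index sets, since the gcd is the product
over their intersection. Hence the index set evolves by `S ↦ S ∆ (S + 1)`, which is Pascal's rule
modulo `2`: the index set at level `m` is the set of `r` with `C(m, r)` odd.
-/

theorem Zfun_mul_mul_of_coprime {a b c : ℕ} (hab : a.Coprime b) (hc : 0 < c) :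
    Zfun (a * c) (b * c) = a * b := by
  have hgcd : Nat.gcd (a * c) (b * c) = c := by rw [Nat.gcd_mul_right, hab, one_mul]
  rw [Zfun, hgcd, show a * c * (b * c) = a * b * c ^ 2 by ring,
    Nat.mul_div_cancel _ (pow_pos hc 2)]

section DistinctPrimes

variable {ι : Type*} {p : ι → ℕ}

theorem coprime_prod_of_disjoint (hp : ∀ i, (p i).Prime) (hinj : Function.Injective p)
    {S T : Finset ι} (h : Disjoint S T) : Nat.Coprime (∏ i ∈ S, p i) (∏ i ∈ T, p i) :=
  Nat.Coprime.prod_left fun i hi => Nat.Coprime.prod_right fun j hj =>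
    (Nat.coprime_primes (hp i) (hp j)).mpr fun hij =>
      Finset.disjoint_left.mp h hi (hinj hij ▸ hj)

theorem Zfun_prod_prod [DecidableEq ι] (hp : ∀ i, (p i).Prime) (hinj : Function.Injective p)
    (S T : Finset ι) :
    Zfun (∏ i ∈ S, p i) (∏ i ∈ T, p i) = ∏ i ∈ symmDiff S T, p i := by
  have hS : ∏ i ∈ S, p i = (∏ i ∈ S \ T, p i) * ∏ i ∈ S ∩ T, p i := by
    rw [mul_comm, Finset.prod_inter_mul_prod_sdiff]
  have hT : ∏ i ∈ T, p i = (∏ i ∈ T \ S, p i) * ∏ i ∈ S ∩ T, p i := by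
    rw [mul_comm, Finset.inter_comm, Finset.prod_inter_mul_prod_sdiff]
  rw [hS, hT, Zfun_mul_mul_of_coprime (coprime_prod_of_disjoint hp hinj disjoint_sdiff_sdiff)
      (Finset.prod_pos fun i _ => (hp i).pos),
    symmDiff_def, Finset.sup_eq_union, Finset.prod_union disjoint_sdiff_sdiff]

end DistinctPrimes

def oddChooseSet (m : ℕ) : Finset ℕ :=
  (Finset.range (m + 1)).filter fun r => Odd (m.choose r)

theorem mem_oddChooseSet {m r : ℕ} : r ∈ oddChooseSet m ↔ Odd (m.choose r) := by
  rw [oddChooseSet, Finset.mem_filter, Finset.mem_range, and_iff_right_iff_imp, Nat.lt_succ_iff]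
  contrapose!
  intro h
  rw [Nat.choose_eq_zero_of_lt h]
  exact Nat.not_odd_zero

theorem oddChooseSet_succ (m : ℕ) :
    oddChooseSet (m + 1) =
      symmDiff (oddChooseSet m) ((oddChooseSet m).map (addRightEmbedding 1)) := by
  ext r
  rcases r with _ | r
  · simp [mem_oddChooseSet, Finset.mem_symmDiff]
  · simp only [mem_oddChooseSet, Nat.choose_succ_succ', Nat.odd_add, ← Nat.not_odd_iff_even,
      Finset.mem_symmDiff, Finset.mem_map, addRightEmbedding_apply, Nat.add_right_cancel_iff,
      exists_eq_right]
    tauto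

theorem ent_closed_form (m n : ℕ) :
    ent m n =
      ∏ r ∈ Finset.filter (fun r => Odd (Nat.choose m r)) (Finset.range (m + 1)),
        Nat.nth Nat.Prime (n + r) := by
  change ent m n = ∏ r ∈ oddChooseSet m, Nat.nth Nat.Prime (n + r)
  induction m generalizing n with
  | zero => simp [ent, oddChooseSet, Finset.filter_singleton]
  | succ m ih =>
    have hshift : ∏ r ∈ oddChooseSet m, Nat.nth Nat.Prime (n + 1 + r)
        = ∏ r ∈ (oddChooseSet m).map (addRightEmbedding 1), Nat.nth Nat.Prime (n + r) := by
      simp only [Finset.prod_map, addRightEmbedding_apply, add_assoc, add_comm 1]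
    rw [ent, ih, ih, hshift, Zfun_prod_prod (fun _ => Nat.prime_nth_prime _)
      ((Nat.nth_injective Nat.infinite_setOfPred_prime).comp (add_right_injective n)),
      oddChooseSet_succ]
end

section
/- For every m ≥ 0, ω(d_m) = 2^{s_2(m)}, where s_2(m) is the number of 1's in the binary expansion of m; equivalently, the quantity δ_m = log_2(ω(d_m)) equals the binary digit sum of m. -/
open Finset Function
open scoped symmDiff

theorem Zfun_mul_mul {g x y : ℕ} (hg : 0 < g) (hxy : x.Coprime y) :
    Zfun (g * x) (g * y) = x * y := by
  rw [Zfun, Nat.gcd_mul_left, hxy, mul_one, show g * x * (g * y) = g ^ 2 * (x * y) by ring]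
  exact Nat.mul_div_cancel_left _ (pow_pos hg 2)

theorem Zfun_prod {ι : Type*} [DecidableEq ι] {f : ι → ℕ} (hf : Pairwise (Nat.Coprime on f))
    (hpos : ∀ i, 0 < f i) (s t : Finset ι) :
    Zfun (∏ i ∈ s, f i) (∏ i ∈ t, f i) = ∏ i ∈ s ∆ t, f i := by
  have hcop : (∏ i ∈ s \ t, f i).Coprime (∏ i ∈ t \ s, f i) :=
    Nat.Coprime.prod_left fun i hi => Nat.Coprime.prod_right fun j hj =>
      hf fun hij => (mem_sdiff.mp hi).2 (hij ▸ (mem_sdiff.mp hj).1)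
  rw [← prod_inter_mul_prod_sdiff s t, ← prod_inter_mul_prod_sdiff t s, inter_comm t s,
    Zfun_mul_mul (prod_pos fun i _ => hpos i) hcop, symmDiff_def, sup_eq_union,
    prod_union disjoint_sdiff_sdiff]

theorem pairwise_coprime_nth_prime : Pairwise (Nat.Coprime on Nat.nth Nat.Prime) := fun i j hij =>
  (Nat.coprime_primes (Nat.prime_nth_prime i) (Nat.prime_nth_prime j)).mpr
    ((Nat.nth_injective Nat.infinite_setOfPred_prime).ne hij)

theorem card_primeFactors_prod_nth_prime (s : Finset ℕ) :
    #(∏ k ∈ s, Nat.nth Nat.Prime k).primeFactors = #s := by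
  let e : ℕ ↪ ℕ := ⟨Nat.nth Nat.Prime, Nat.nth_injective Nat.infinite_setOfPred_prime⟩
  have hprod : ∏ k ∈ s, Nat.nth Nat.Prime k = ∏ p ∈ s.map e, p := (prod_map s e id).symm
  rw [hprod, Nat.primeFactors_prod, card_map]
  intro p hp
  obtain ⟨k, -, rfl⟩ := mem_map.mp hp
  exact Nat.prime_nth_prime k

theorem odd_choose_iff (n k : ℕ) :
    Odd (n.choose k) ↔ k % 2 ≤ n % 2 ∧ Odd ((n / 2).choose (k / 2)) := by
  have : Fact (Nat.Prime 2) := ⟨Nat.prime_two⟩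
  have hlucas : n.choose k % 2 = (n % 2).choose (k % 2) * (n / 2).choose (k / 2) % 2 :=
    Choose.choose_modEq_choose_mod_mul_choose_div_nat
  rw [Nat.odd_iff, hlucas, ← Nat.odd_iff, Nat.odd_mul]
  rcases Nat.mod_two_eq_zero_or_one n with hn | hn <;>
    rcases Nat.mod_two_eq_zero_or_one k with hk | hk <;> simp [hn, hk]

def oddChoose (m : ℕ) : Finset ℕ := {k ∈ range (m + 1) | Odd (m.choose k)}

theorem mem_oddChoose {m k : ℕ} : k ∈ oddChoose m ↔ Odd (m.choose k) := by
  refine ⟨fun h => (mem_filter.mp h).2, fun h => mem_filter.mpr ⟨mem_range.mpr ?_, h⟩⟩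
  by_contra hk
  rw [Nat.choose_eq_zero_of_lt (by omega)] at h
  exact Nat.not_odd_zero h

theorem oddChoose_eq_image (m : ℕ) :
    oddChoose m = (oddChoose (m / 2) ×ˢ range (m % 2 + 1)).image fun p => 2 * p.1 + p.2 := by
  ext k
  simp only [mem_oddChoose, mem_image, mem_product, mem_range, Prod.exists, odd_choose_iff m k]
  constructor
  · rintro ⟨hk, hodd⟩
    exact ⟨k / 2, k % 2, ⟨hodd, by omega⟩, by omega⟩
  · rintro ⟨j, r, ⟨hj, hr⟩, rfl⟩
    rw [show (2 * j + r) / 2 = j by omega]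
    exact ⟨by omega, hj⟩

theorem card_oddChoose (m : ℕ) : #(oddChoose m) = 2 ^ (Nat.digits 2 m).sum := by
  induction m using Nat.strong_induction_on with
  | _ m ih =>
  rcases m.eq_zero_or_pos with rfl | hm
  · rfl
  have hinj : Set.InjOn (fun p : ℕ × ℕ => 2 * p.1 + p.2)
      ↑(oddChoose (m / 2) ×ˢ range (m % 2 + 1)) := by
    rintro ⟨j, r⟩ h ⟨j', r'⟩ h' he
    simp only [coe_product, Set.mem_prod, mem_coe, mem_range] at h h' he
    ext <;> omega
  have hdigit : m % 2 + 1 = 2 ^ (m % 2) := by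
    rcases Nat.mod_two_eq_zero_or_one m with h | h <;> rw [h] <;> rfl
  rw [oddChoose_eq_image, card_image_of_injOn hinj, card_product, card_range,
    ih _ (Nat.div_lt_self hm one_lt_two), Nat.digits_def' one_lt_two hm, List.sum_cons, pow_add,
    hdigit, mul_comm]

def oddChooseFrom (m n : ℕ) : Finset ℕ := (oddChoose m).map (addLeftEmbedding n)

theorem mem_oddChooseFrom {m n x : ℕ} :
    x ∈ oddChooseFrom m n ↔ n ≤ x ∧ Odd (m.choose (x - n)) := by
  simp only [oddChooseFrom, mem_map, mem_oddChoose, addLeftEmbedding_apply]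
  constructor
  · rintro ⟨k, hk, rfl⟩
    simpa using hk
  · rintro ⟨hx, hodd⟩
    exact ⟨x - n, hodd, by omega⟩

theorem oddChooseFrom_succ (m n : ℕ) :
    oddChooseFrom (m + 1) n = oddChooseFrom m n ∆ oddChooseFrom m (n + 1) := by
  ext x
  simp only [mem_symmDiff, mem_oddChooseFrom]
  rcases lt_trichotomy x n with hx | rfl | hx
  · omega
  · simp
  · obtain ⟨k, rfl⟩ : ∃ k, x = n + k + 1 := ⟨x - n - 1, by omega⟩
    rw [show n + k + 1 - n = k + 1 by omega, show n + k + 1 - (n + 1) = k by omega,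
      Nat.choose_succ_succ', Nat.odd_add, ← Nat.not_odd_iff_even]
    simp only [show n ≤ n + k + 1 by omega, show n + 1 ≤ n + k + 1 by omega, true_and]
    tauto

theorem ent_eq_prod_nth_prime (m n : ℕ) :
    ent m n = ∏ x ∈ oddChooseFrom m n, Nat.nth Nat.Prime x := by
  induction m generalizing n with
  | zero => simp [ent, oddChooseFrom, oddChoose, filter_singleton]
  | succ m ih =>
    rw [ent, ih, ih, Zfun_prod pairwise_coprime_nth_prime (fun k => (Nat.prime_nth_prime k).pos),
      oddChooseFrom_succ]

theorem omega_d_eq_pow_binary_digit_sum (m : ℕ) :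
    (dseq m).primeFactors.card = 2 ^ (Nat.digits 2 m).sum := by
  rw [dseq, ent_eq_prod_nth_prime, card_primeFactors_prod_nth_prime, oddChooseFrom, card_map,
    card_oddChoose]
end

section
/- For every t ≥ 0 and every s ≥ 1, ω(d_{t·2^s}) = ω(d_t); equivalently, δ_{t·2^s} = δ_t where δ_m = log_2(ω(d_m)), so the sequence (δ_m) is a fractal sequence containing itself as the subsequence of terms of even index. -/
/-! `Z` acts on squarefree numbers as the symmetric difference of their sets of prime factors.
Hence, by induction on `m`, `ent m n` is the product of the primes `p_{n+k}` with `k` in row `m`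
of Pascal's triangle mod 2, and `ω(d_m)` is the number of odd entries of that row. Since
`(1 + X)^(2m) = (1 + X^2)^m` over `𝔽₂`, row `2m` is row `m` spread out by a factor of 2, so it has
the same number of odd entries. -/

open Finset symmDiff

lemma Zfun_prod_primes {S T : Finset ℕ} (hS : ∀ p ∈ S, p.Prime) (hT : ∀ p ∈ T, p.Prime) :
    Zfun (∏ p ∈ S, p) (∏ p ∈ T, p) = ∏ p ∈ S ∆ T, p := by
  have hS_split : ∏ p ∈ S, p = (∏ p ∈ S \ T, p) * ∏ p ∈ S ∩ T, p := by
    rw [← sdiff_inter_self_left, prod_sdiff inter_subset_left]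
  have hT_split : ∏ p ∈ T, p = (∏ p ∈ T \ S, p) * ∏ p ∈ S ∩ T, p := by
    rw [inter_comm, ← sdiff_inter_self_left, prod_sdiff inter_subset_left]
  have hcop : Nat.Coprime (∏ p ∈ S \ T, p) (∏ p ∈ T \ S, p) :=
    Nat.coprime_prod_left_iff.2 fun p hp => Nat.coprime_prod_right_iff.2 fun q hq =>
      (Nat.coprime_primes (hS p (mem_sdiff.1 hp).1) (hT q (mem_sdiff.1 hq).1)).2
        (by rintro rfl; exact (mem_sdiff.1 hp).2 (mem_sdiff.1 hq).1)
  have hgcd : Nat.gcd (∏ p ∈ S, p) (∏ p ∈ T, p) = ∏ p ∈ S ∩ T, p := by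
    rw [hS_split, hT_split, Nat.gcd_mul_right, hcop, one_mul]
  have hI : 0 < (∏ p ∈ S ∩ T, p) ^ 2 :=
    pow_pos (prod_pos fun p hp => (hS p (mem_inter.1 hp).1).pos) 2
  rw [Zfun, hgcd, hS_split, hT_split, symmDiff_def, sup_eq_union,
    prod_union disjoint_sdiff_sdiff]
  convert Nat.mul_div_cancel _ hI using 2
  ring

/-- Row `m` of Pascal's triangle mod 2: the `k` with `m.choose k` odd. -/
def pascalSupport : ℕ → Finset ℕ
  | 0 => {0}
  | m + 1 => pascalSupport m ∆ (pascalSupport m).image (· + 1)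

lemma pascalSupport_add_two (m : ℕ) :
    pascalSupport (m + 2) = pascalSupport m ∆ (pascalSupport m).image (· + 2) := by
  rw [pascalSupport, pascalSupport, image_symmDiff _ _ (add_left_injective 1), image_image,
    symmDiff_assoc, symmDiff_symmDiff_cancel_left]
  rfl

lemma pascalSupport_two_mul (m : ℕ) :
    pascalSupport (2 * m) = (pascalSupport m).image (· * 2) := by
  induction m with
  | zero => rfl
  | succ m ih =>
    rw [mul_add_one, pascalSupport_add_two, ih, pascalSupport,
      image_symmDiff _ _ (mul_left_injective₀ two_ne_zero), image_image, image_image]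
    congr 2
    funext k
    simp only [Function.comp_apply]
    ring

lemma card_pascalSupport_mul_two_pow (t s : ℕ) :
    (pascalSupport (t * 2 ^ s)).card = (pascalSupport t).card := by
  induction s with
  | zero => rw [pow_zero, mul_one]
  | succ s ih =>
    rw [pow_succ, ← mul_assoc, mul_comm _ 2, pascalSupport_two_mul,
      card_image_of_injective _ (mul_left_injective₀ two_ne_zero), ih]

lemma nth_prime_add_injective (n : ℕ) : Function.Injective fun k => Nat.nth Nat.Prime (n + k) :=
  (Nat.nth_injective Nat.infinite_setOfPred_prime).comp (add_right_injective n)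

lemma prime_of_mem_image_nth_prime (n : ℕ) (S : Finset ℕ) :
    ∀ p ∈ S.image (fun k => Nat.nth Nat.Prime (n + k)), p.Prime :=
  forall_mem_image.2 fun _ _ => Nat.prime_nth_prime _

lemma ent_eq_prod (m n : ℕ) :
    ent m n = ∏ p ∈ (pascalSupport m).image (fun k => Nat.nth Nat.Prime (n + k)), p := by
  induction m generalizing n with
  | zero => simp [ent, pascalSupport]
  | succ m ih =>
    rw [ent, ih, ih, Zfun_prod_primes (prime_of_mem_image_nth_prime _ _)
      (prime_of_mem_image_nth_prime _ _), pascalSupport,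
      image_symmDiff _ _ (nth_prime_add_injective n), image_image]
    congr 3
    funext k
    simp only [Function.comp_apply, add_right_comm, add_assoc]

lemma card_primeFactors_ent (m n : ℕ) :
    (ent m n).primeFactors.card = (pascalSupport m).card := by
  rw [ent_eq_prod, Nat.primeFactors_prod (prime_of_mem_image_nth_prime _ _),
    card_image_of_injective _ (nth_prime_add_injective n)]

theorem omega_d_fractal_general (t s : ℕ) :
    (dseq (t * 2 ^ s)).primeFactors.card = (dseq t).primeFactors.card := by
  rw [dseq, dseq, card_primeFactors_ent, card_primeFactors_ent, card_pascalSupport_mul_two_pow]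

theorem omega_d_fractal (t s : ℕ) (hs : 1 ≤ s) :
    (dseq (t * 2 ^ s)).primeFactors.card = (dseq t).primeFactors.card :=
  omega_d_fractal_general t s
end
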